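/- For every real s > 1, the prime zeta series satisfies ∑_{p prime} p^{−s} = ∑_{n=1}^{∞} (μ(n)/n) · log ζ(ns), where the series on the right converges absolutely. -/

import Mathlib

/-- The Riemann zeta function for real argument `x > 1`, `ζ(x) = ∑_{n ≥ 1} n^{-x}`. -/
noncomputable def zetaR (x : ℝ) : ℝ := ∑' n : ℕ, ((n : ℝ) + 1) ^ (-x)

/-!
By the Euler product, `log ζ(x) = ∑_p ∑_{k ≥ 1} p^{-kx} / k`, so the right-hand side is the sum of
`μ(n) / (nk) · q^{nk}` over primes `p` and `n, k ≥ 1`, where `q = p^{-s}`. For a fixed `p`, grouping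
the terms by `m = nk` and using `∑_{n ∣ m} μ(n) = [m = 1]` leaves exactly `q`. All interchanges of
summation are justified by `|log (1 - x)| ≤ 2|x|` for `|x| ≤ 1/2`, which bounds the `(n, p)` term by
`2 · 2^{-n} · p^{-s}`.
-/

open ArithmeticFunction
open scoped ArithmeticFunction.Moebius

lemma sum_divisors_moebius (m : ℕ) : ∑ d ∈ m.divisors, (μ d : ℝ) = if m = 1 then 1 else 0 := by
  rw [← one_apply, ← coe_moebius_mul_coe_zeta, coe_mul_zeta_apply]
  simp only [intCoe_apply]

lemma abs_moebius_div_le_one (n : ℕ) {b : ℝ} (hb : 1 ≤ b) : |(μ n : ℝ) / b| ≤ 1 := by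
  rw [abs_div, abs_of_pos (show (0 : ℝ) < b by linarith), div_le_one (by linarith)]
  exact (mod_cast abs_moebius_le_one : |(μ n : ℝ)| ≤ 1).trans hb

lemma hasSum_moebius_div_mul_pow {q : ℝ} (hq : |q| < 1) :
    HasSum (fun c : ℕ+ × ℕ+ => (μ c.1 : ℝ) / (c.1 * c.2 : ℕ) * q ^ (c.1 * c.2 : ℕ)) q := by
  set f := fun c : ℕ+ × ℕ+ => (μ c.1 : ℝ) / (c.1 * c.2 : ℕ) * q ^ (c.1 * c.2 : ℕ)
  have hf : Summable f := by
    refine Summable.of_norm_bounded (summable_prod_mul_pow 0 (r := |q|) (by simpa)) fun c => ?_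
    simp only [f, norm_mul, norm_pow, Real.norm_eq_abs, pow_zero, one_mul]
    exact mul_le_of_le_one_left (by positivity)
      (abs_moebius_div_le_one _ (mod_cast (c.1 * c.2).pos))
  have hfiber (m : ℕ+) : HasSum (fun x : (m : ℕ).divisorsAntidiagonal =>
      f (sigmaAntidiagonalEquivProd ⟨m, x⟩)) (if m = 1 then q else 0) := by
    convert hasSum_fintype (fun x : (m : ℕ).divisorsAntidiagonal =>
      f (sigmaAntidiagonalEquivProd ⟨m, x⟩)) using 1
    have hterm (x : (m : ℕ).divisorsAntidiagonal) :
        f (sigmaAntidiagonalEquivProd ⟨m, x⟩) = (μ x.1.1 : ℝ) * ((m : ℝ)⁻¹ * q ^ (m : ℕ)) := by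
      simp only [f, sigmaAntidiagonalEquivProd, divisorsAntidiagonalFactors, Equiv.coe_fn_mk,
        PNat.mk_coe, (Nat.mem_divisorsAntidiagonal.mp x.2).1]
      ring
    rw [Fintype.sum_congr _ _ hterm,
      Finset.sum_coe_sort _ fun x : ℕ × ℕ => (μ x.1 : ℝ) * ((m : ℝ)⁻¹ * q ^ (m : ℕ)),
      ← Finset.sum_mul, Nat.sum_divisorsAntidiagonal fun a _ => (μ a : ℝ), sum_divisors_moebius]
    obtain rfl | hm := eq_or_ne m 1
    · simp
    · simp [hm]
  have hsigma := (sigmaAntidiagonalEquivProd.summable_iff.mpr hf).hasSum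
  rw [← sigmaAntidiagonalEquivProd.hasSum_iff, ← (hsigma.sigma hfiber).unique (hasSum_ite_eq 1 q)]
  exact hsigma

lemma hasSum_moebius_div_mul_neg_log_one_sub_pow {q : ℝ} (hq : |q| < 1) :
    HasSum (fun n : ℕ => (μ (n + 1) : ℝ) / ((n : ℝ) + 1) * -Real.log (1 - q ^ (n + 1))) q := by
  have hshift := hasSum_pnat_iff_hasSum_succ
    (f := fun n : ℕ => (μ n : ℝ) / (n : ℝ) * -Real.log (1 - q ^ n)) (m := q)
  simp only [Nat.cast_add, Nat.cast_one] at hshift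
  refine hshift.mp ((hasSum_moebius_div_mul_pow hq).prod_fiberwise fun a => ?_)
  have hqa : |q ^ (a : ℕ)| < 1 := by
    rw [abs_pow]
    exact pow_lt_one₀ (abs_nonneg q) hq a.ne_zero
  have hlog := hasSum_pnat_iff_hasSum_succ (f := fun b : ℕ => (q ^ (a : ℕ)) ^ b / b)
    (m := -Real.log (1 - q ^ (a : ℕ)))
  simp only [Nat.cast_add, Nat.cast_one] at hlog
  refine ((hlog.mpr (Real.hasSum_pow_div_log_of_abs_lt_one hqa)).mul_left
    ((μ a : ℝ) / a)).congr_fun fun b => ?_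
  rw [Nat.cast_mul, pow_mul]
  field_simp

lemma zetaR_eq_riemannZeta {x : ℝ} (hx : 1 < x) : (zetaR x : ℂ) = riemannZeta x := by
  rw [zeta_eq_tsum_one_div_nat_add_one_cpow (by simpa using hx), zetaR, Complex.ofReal_tsum]
  refine tsum_congr fun n => ?_
  rw [Complex.ofReal_cpow (by positivity), one_div, ← Complex.cpow_neg]
  push_cast
  rfl

lemma log_zetaR_eq_tsum {x : ℝ} (hx : 1 < x) :
    Real.log (zetaR x) = ∑' p : Nat.Primes, -Real.log (1 - (p : ℝ) ^ (-x)) := by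
  have hterm (p : Nat.Primes) : ((-Real.log (1 - (p : ℝ) ^ (-x)) : ℝ) : ℂ) =
      -Complex.log (1 - (p : ℂ) ^ (-(x : ℂ))) := by
    have : (p : ℝ) ^ (-x) < 1 :=
      Real.rpow_lt_one_of_one_lt_of_neg (mod_cast p.prop.one_lt) (by linarith)
    rw [Complex.ofReal_neg, Complex.ofReal_log (by linarith), Complex.ofReal_sub,
      Complex.ofReal_one, Complex.ofReal_cpow (by positivity)]
    push_cast
    rfl
  have h := riemannZeta_eulerProduct_exp_log (s := x) (by simpa using hx)
  simp_rw [← hterm, ← Complex.ofReal_tsum, ← Complex.ofReal_exp, ← zetaR_eq_riemannZeta hx] at h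
  rw [← Complex.ofReal_injective h, Real.log_exp]

lemma abs_log_one_sub_le {x : ℝ} (hx : |x| ≤ 1 / 2) : |Real.log (1 - x)| ≤ 2 * |x| := by
  have h := Real.abs_log_sub_add_sum_range_le (x := x) (by linarith) 0
  simp only [Finset.range_zero, Finset.sum_empty, zero_add, pow_one] at h
  calc _ ≤ |x| / (1 - |x|) := h
    _ ≤ 2 * |x| := by rw [div_le_iff₀ (by linarith)]; nlinarith [abs_nonneg x]

lemma summable_abs_moebius_div_mul_neg_log_one_sub_pow {ι : Type*} {q : ι → ℝ}
    (hq : ∀ i, |q i| ≤ 1 / 2) (hsum : Summable fun i => |q i|) :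
    Summable fun x : ℕ × ι =>
      |(μ (x.1 + 1) : ℝ) / ((x.1 : ℝ) + 1) * -Real.log (1 - q x.2 ^ (x.1 + 1))| := by
  refine Summable.of_nonneg_of_le (fun _ => abs_nonneg _) (fun x => ?_)
    ((summable_geometric_two.mul_of_nonneg hsum (fun _ => by positivity)
      (fun _ => abs_nonneg _)).mul_left 2)
  obtain ⟨n, i⟩ := x
  have hμ := abs_moebius_div_le_one (n + 1) (le_add_of_nonneg_left n.cast_nonneg)
  have hpow : |q i ^ (n + 1)| ≤ (1 / 2) ^ n * |q i| := by
    rw [abs_pow, pow_succ]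
    gcongr
    exact hq i
  have hpow_half : |q i ^ (n + 1)| ≤ 1 / 2 := by
    rw [abs_pow]
    exact (pow_le_of_le_one (abs_nonneg _) ((hq i).trans (by norm_num)) n.succ_ne_zero).trans (hq i)
  calc _ = |(μ (n + 1) : ℝ) / ((n : ℝ) + 1)| * |Real.log (1 - q i ^ (n + 1))| := by
        rw [abs_mul, abs_neg]
    _ ≤ 1 * (2 * |q i ^ (n + 1)|) :=
        mul_le_mul hμ (abs_log_one_sub_le hpow_half) (abs_nonneg _) zero_le_one
    _ ≤ 2 * ((1 / 2) ^ n * |q i|) := by linarith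

lemma Nat.Primes.rpow_neg_le_one_half (p : Nat.Primes) {s : ℝ} (hs : 1 ≤ s) :
    (p : ℝ) ^ (-s) ≤ 1 / 2 := by
  have hp : (2 : ℝ) ≤ p := mod_cast p.prop.two_le
  calc (p : ℝ) ^ (-s) ≤ (p : ℝ) ^ (-1 : ℝ) :=
        Real.rpow_le_rpow_of_exponent_le (by linarith) (by linarith)
    _ = (p : ℝ)⁻¹ := Real.rpow_neg_one _
    _ ≤ 1 / 2 := by rw [one_div]; exact inv_anti₀ two_pos hp

/-- For every real `s > 1`,
`∑_{p prime} p^{-s} = ∑_{n ≥ 1} (μ(n)/n)·log ζ(ns)`, the right series converging absolutely. -/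
theorem statement7 (s : ℝ) (hs : 1 < s) :
    Summable
      (fun n : ℕ =>
        |(ArithmeticFunction.moebius (n + 1) : ℝ) / ((n : ℝ) + 1) *
          Real.log (zetaR (((n : ℝ) + 1) * s))|) ∧
    (∑' p : Nat.Primes, ((p : ℕ) : ℝ) ^ (-s)) =
      ∑' n : ℕ,
        (ArithmeticFunction.moebius (n + 1) : ℝ) / ((n : ℝ) + 1) *
          Real.log (zetaR (((n : ℝ) + 1) * s)) := by
  set q : Nat.Primes → ℝ := fun p => (p : ℝ) ^ (-s)
  have hq (p : Nat.Primes) : |q p| ≤ 1 / 2 := by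
    rw [abs_of_nonneg (by positivity)]
    exact p.rpow_neg_le_one_half hs.le
  set g : ℕ → Nat.Primes → ℝ := fun n p =>
    (μ (n + 1) : ℝ) / ((n : ℝ) + 1) * -Real.log (1 - q p ^ (n + 1))
  have hg : Summable fun x : ℕ × Nat.Primes => |g x.1 x.2| :=
    summable_abs_moebius_div_mul_neg_log_one_sub_pow hq
      (Nat.Primes.summable_rpow.mpr (by linarith)).abs
  have hrow (n : ℕ) : (μ (n + 1) : ℝ) / ((n : ℝ) + 1) * Real.log (zetaR (((n : ℝ) + 1) * s)) =
      ∑' p, g n p := by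
    rw [log_zetaR_eq_tsum (by nlinarith), ← tsum_mul_left]
    refine tsum_congr fun p => ?_
    rw [show -(((n : ℝ) + 1) * s) = -s * ((n + 1 : ℕ) : ℝ) by push_cast; ring,
      Real.rpow_mul (by positivity), Real.rpow_natCast]
  simp_rw [hrow]
  have hcol (p : Nat.Primes) : HasSum (fun n => g n p) (q p) :=
    hasSum_moebius_div_mul_neg_log_one_sub_pow ((hq p).trans_lt (by norm_num))
  refine ⟨?_, ?_⟩
  · refine hg.prod.of_nonneg_of_le (fun _ => abs_nonneg _) fun n => ?_
    simpa only [Real.norm_eq_abs] using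
      norm_tsum_le_tsum_norm (f := g n) (by simpa only [Real.norm_eq_abs] using hg.prod_factor n)
  · calc ∑' p, q p = ∑' p, ∑' n, g n p := tsum_congr fun p => (hcol p).tsum_eq.symm
      _ = ∑' n, ∑' p, g n p := Summable.tsum_comm (f := g) hg.of_abs
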